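/- Let P, Q be modules over a commutative unital 𝕜-algebra A and k ≥ 0. Then j_k : P → 𝒥^k(P) is a differential operator of order ≤ k over A, and for every differential operator Δ : P → Q of order ≤ k there exists a unique A-linear map ψ^Δ : 𝒥^k(P) → Q with Δ = ψ^Δ ∘ j_k. The correspondence Δ ↦ ψ^Δ is an isomorphism of A-modules Diff_k(P,Q) ≅ Hom_A(𝒥^k(P), Q), where Diff_k(P,Q) carries the action (a·Δ)(p) = a·Δ(p); i.e., 𝒥^k(P) is a representative object for the functor Q ↦ Diff_k(P,Q). -/

import Mathlib

/-- `dop A a f = δ_a(f)`, where `δ_a(f)(p) = f (a • p) - a • f p`. -/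
def dop (A : Type*) [CommRing A] {M N : Type*} [AddCommGroup M] [Module A M]
    [AddCommGroup N] [Module A N] (a : A) (f : M → N) : M → N :=
  fun p => f (a • p) - a • f p

/-- `IsDiffOp A k f` : `f` is a differential operator of order at most `k` over `A`,
i.e. `δ_{a₀}(δ_{a₁}(⋯ δ_{a_k}(f) ⋯)) = 0` for all `a₀, …, a_k ∈ A`. -/
def IsDiffOp (A : Type*) [CommRing A] {M N : Type*} [AddCommGroup M] [Module A M]
    [AddCommGroup N] [Module A N] : ℕ → (M → N) → Prop
  | 0, f => ∀ a : A, dop A a f = 0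
  | k + 1, f => ∀ a : A, IsDiffOp A k (dop A a f)

open scoped TensorProduct

section
variable (𝕜 : Type*) [Field 𝕜] (A : Type*) [CommRing A] [Algebra 𝕜 A]
variable (P : Type*) [AddCommGroup P] [Module 𝕜 P] [Module A P] [IsScalarTower 𝕜 A P]

/-- `ε : P → A ⊗_𝕜 P`,  `ε(p) = 1 ⊗ p`. -/
noncomputable def epsFun : P → A ⊗[𝕜] P := fun p => (1 : A) ⊗ₜ[𝕜] p

/-- The submodule `μ^k ⊆ A ⊗_𝕜 P` generated by all `δ_{a₀}(δ_{a₁}(⋯ δ_{a_k}(ε)⋯))(p)`. -/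
def muSub (k : ℕ) : Submodule A (A ⊗[𝕜] P) :=
  Submodule.span A
    {x | ∃ (v : Fin (k + 1) → A) (p : P), ((List.ofFn v).foldr (dop A) (epsFun 𝕜 A P)) p = x}

/-- The module of `k`-jets `𝒥^k(P) = (A ⊗_𝕜 P) / μ^k`. -/
abbrev JetMod (k : ℕ) := (A ⊗[𝕜] P) ⧸ muSub 𝕜 A P k

/-- The operator `j_k : P → 𝒥^k(P)`,  `j_k(p) = [1 ⊗ p]`. -/
noncomputable def jetMap (k : ℕ) : P → JetMod 𝕜 A P k :=
  fun p => Submodule.Quotient.mk (epsFun 𝕜 A P p)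

end

/-!
Extension of scalars identifies `𝕜`-linear maps `Δ : P → Q` with `A`-linear maps
`Δ_A : A ⊗_𝕜 P → Q` through `Δ = Δ_A ∘ ε`. Since `δ_a` commutes with post-composition by
`A`-linear maps, `Δ_A` sends the generator `δ_{a₀}⋯δ_{a_k}(ε)(p)` of `μ^k` to
`δ_{a₀}⋯δ_{a_k}(Δ)(p)`, so `Δ_A` factors through `𝒥^k(P)` when `Δ` has order `≤ k`; the same
computation for the quotient map shows that `j_k` has order `≤ k`.
-/

section DifferentialOperators

variable {A : Type*} [CommRing A] {M N R : Type*} [AddCommGroup M] [Module A M]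
  [AddCommGroup N] [Module A N] [AddCommGroup R] [Module A R]

theorem dop_linearMap_comp (g : N →ₗ[A] R) (f : M → N) (a : A) :
    dop A a (g ∘ f) = g ∘ dop A a f := by
  funext p
  simp [dop]

theorem foldr_dop_linearMap_comp (g : N →ₗ[A] R) (f : M → N) (l : List A) :
    l.foldr (dop A) (g ∘ f) = g ∘ l.foldr (dop A) f := by
  induction l with
  | nil => rfl
  | cons a l ih => rw [List.foldr_cons, List.foldr_cons, ih, dop_linearMap_comp]

theorem foldr_ofFn_dop_succ {k : ℕ} (v : Fin (k + 1) → A) (f : M → N) :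
    (List.ofFn v).foldr (dop A) f =
      (List.ofFn (Fin.init v)).foldr (dop A) (dop A (v (Fin.last k)) f) := by
  rw [List.ofFn_succ', List.concat_eq_append, List.foldr_append]
  rfl

theorem isDiffOp_iff_foldr_dop (k : ℕ) (f : M → N) :
    IsDiffOp A k f ↔ ∀ v : Fin (k + 1) → A, (List.ofFn v).foldr (dop A) f = 0 := by
  induction k generalizing f with
  | zero =>
    refine ⟨fun h v => ?_, fun h a => by simpa using h ![a]⟩
    simpa using h (v 0)
  | succ k ih =>
    refine ⟨fun h v => ?_, fun h a => (ih _).2 fun v => ?_⟩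
    · rw [foldr_ofFn_dop_succ]
      exact (ih _).1 (h _) _
    · have h' := h (Fin.snoc v a)
      rwa [foldr_ofFn_dop_succ, Fin.init_snoc, Fin.snoc_last] at h'

theorem IsDiffOp.linearMap_comp {k : ℕ} {f : M → N} (hf : IsDiffOp A k f) (g : N →ₗ[A] R) :
    IsDiffOp A k (g ∘ f) := by
  refine (isDiffOp_iff_foldr_dop k _).2 fun v => ?_
  rw [foldr_dop_linearMap_comp, (isDiffOp_iff_foldr_dop k f).1 hf v]
  funext p
  exact map_zero g

end DifferentialOperators

section Jets

variable {𝕜 : Type*} [Field 𝕜] {A : Type*} [CommRing A] [Algebra 𝕜 A]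
  {P Q : Type*} [AddCommGroup P] [Module 𝕜 P] [Module A P]
  [AddCommGroup Q] [Module 𝕜 Q] [Module A Q] [IsScalarTower 𝕜 A Q]

variable (𝕜 A P) in
noncomputable def jetLinearMap (k : ℕ) : P →ₗ[𝕜] JetMod 𝕜 A P k :=
  (muSub 𝕜 A P k).mkQ.restrictScalars 𝕜 ∘ₗ TensorProduct.mk 𝕜 A P 1

theorem isDiffOp_jetMap (k : ℕ) : IsDiffOp A k (jetMap 𝕜 A P k) := by
  refine (isDiffOp_iff_foldr_dop k _).2 fun v => ?_
  change (List.ofFn v).foldr (dop A) ((muSub 𝕜 A P k).mkQ ∘ epsFun 𝕜 A P) = 0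
  rw [foldr_dop_linearMap_comp]
  funext p
  exact (Submodule.Quotient.mk_eq_zero _).2 (Submodule.subset_span ⟨v, p, rfl⟩)

theorem muSub_le_ker_liftBaseChange {k : ℕ} {Δ : P →ₗ[𝕜] Q} (hΔ : IsDiffOp A k Δ) :
    muSub 𝕜 A P k ≤ LinearMap.ker (Δ.liftBaseChange A) := by
  refine Submodule.span_le.2 ?_
  rintro _ ⟨v, p, rfl⟩
  have hε : Δ.liftBaseChange A ∘ epsFun 𝕜 A P = Δ := funext (Δ.liftBaseChange_one_tmul A)
  rw [SetLike.mem_coe, LinearMap.mem_ker, ← Function.comp_apply (f := Δ.liftBaseChange A),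
    ← foldr_dop_linearMap_comp, hε, (isDiffOp_iff_foldr_dop k _).1 hΔ v, Pi.zero_apply]

noncomputable def jetLift {k : ℕ} (Δ : P →ₗ[𝕜] Q) (hΔ : IsDiffOp A k Δ) :
    JetMod 𝕜 A P k →ₗ[A] Q :=
  (muSub 𝕜 A P k).liftQ (Δ.liftBaseChange A) (muSub_le_ker_liftBaseChange hΔ)

theorem jetLift_comp_jetMap {k : ℕ} (Δ : P →ₗ[𝕜] Q) (hΔ : IsDiffOp A k Δ) :
    jetLift Δ hΔ ∘ jetMap 𝕜 A P k = Δ :=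
  funext (Δ.liftBaseChange_one_tmul A)

theorem JetMod.linearMap_ext {k : ℕ} {ψ ψ' : JetMod 𝕜 A P k →ₗ[A] Q}
    (h : ψ ∘ jetMap 𝕜 A P k = ψ' ∘ jetMap 𝕜 A P k) : ψ = ψ' :=
  Submodule.linearMap_qext _ <|
    (LinearMap.liftBaseChangeEquiv A).symm.injective <| LinearMap.ext (congrFun h)

end Jets

theorem jet_module_represents_diff_general
    (𝕜 : Type*) [Field 𝕜] (A : Type*) [CommRing A] [Algebra 𝕜 A]
    (P Q : Type*)
    [AddCommGroup P] [Module 𝕜 P] [Module A P]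
    [AddCommGroup Q] [Module 𝕜 Q] [Module A Q] [IsScalarTower 𝕜 A Q]
    (k : ℕ) :
    -- j_k is a 𝕜-linear differential operator of order ≤ k
    (IsLinearMap 𝕜 (jetMap 𝕜 A P k) ∧ IsDiffOp A k (jetMap 𝕜 A P k)) ∧
    -- universal property: unique A-linear factorization of operators of order ≤ k
    (∀ Δ : P →ₗ[𝕜] Q, IsDiffOp A k ⇑Δ →
        ∃! ψ : JetMod 𝕜 A P k →ₗ[A] Q, ⇑Δ = ⇑ψ ∘ jetMap 𝕜 A P k) ∧
    -- ψ ↦ ψ ∘ j_k lands in Diff_k(P,Q) …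
    (∀ ψ : JetMod 𝕜 A P k →ₗ[A] Q,
        IsLinearMap 𝕜 (⇑ψ ∘ jetMap 𝕜 A P k) ∧ IsDiffOp A k (⇑ψ ∘ jetMap 𝕜 A P k)) ∧
    -- … and is an A-module homomorphism (bijectivity follows from the two items above)
    (∀ ψ ψ' : JetMod 𝕜 A P k →ₗ[A] Q,
        ⇑(ψ + ψ') ∘ jetMap 𝕜 A P k = ⇑ψ ∘ jetMap 𝕜 A P k + ⇑ψ' ∘ jetMap 𝕜 A P k) ∧
    (∀ (a : A) (ψ : JetMod 𝕜 A P k →ₗ[A] Q),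
        ⇑(a • ψ) ∘ jetMap 𝕜 A P k = a • (⇑ψ ∘ jetMap 𝕜 A P k)) := by
  refine ⟨⟨(jetLinearMap 𝕜 A P k).isLinear, isDiffOp_jetMap k⟩, fun Δ hΔ => ?_,
    fun ψ => ⟨(ψ.restrictScalars 𝕜 ∘ₗ jetLinearMap 𝕜 A P k).isLinear,
      (isDiffOp_jetMap k).linearMap_comp ψ⟩, fun _ _ => rfl, fun _ _ => rfl⟩
  exact ⟨jetLift Δ hΔ, (jetLift_comp_jetMap Δ hΔ).symm,
    fun ψ hψ => JetMod.linearMap_ext (hψ ▸ jetLift_comp_jetMap Δ hΔ).symm⟩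

/-- `j_k : P → 𝒥^k(P)` is a (`𝕜`-linear) differential operator of
order `≤ k` over `A`; every differential operator `Δ : P → Q` of order `≤ k` factors
uniquely as `Δ = ψ^Δ ∘ j_k` with `ψ^Δ : 𝒥^k(P) → Q` `A`-linear; and `ψ ↦ ψ ∘ j_k` is an
isomorphism of `A`-modules `Hom_A(𝒥^k(P), Q) ≅ Diff_k(P,Q)` (with `(a • Δ)(p) = a • Δ p`
on the right), i.e. `𝒥^k(P)` represents the functor `Q ↦ Diff_k(P,Q)`. -/
theorem jet_module_represents_diff
    (𝕜 : Type*) [Field 𝕜] (A : Type*) [CommRing A] [Algebra 𝕜 A]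
    (P Q : Type*)
    [AddCommGroup P] [Module 𝕜 P] [Module A P] [IsScalarTower 𝕜 A P]
    [AddCommGroup Q] [Module 𝕜 Q] [Module A Q] [IsScalarTower 𝕜 A Q]
    (k : ℕ) :
    -- j_k is a 𝕜-linear differential operator of order ≤ k
    (IsLinearMap 𝕜 (jetMap 𝕜 A P k) ∧ IsDiffOp A k (jetMap 𝕜 A P k)) ∧
    -- universal property: unique A-linear factorization of operators of order ≤ k
    (∀ Δ : P →ₗ[𝕜] Q, IsDiffOp A k ⇑Δ →
        ∃! ψ : JetMod 𝕜 A P k →ₗ[A] Q, ⇑Δ = ⇑ψ ∘ jetMap 𝕜 A P k) ∧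
    -- ψ ↦ ψ ∘ j_k lands in Diff_k(P,Q) …
    (∀ ψ : JetMod 𝕜 A P k →ₗ[A] Q,
        IsLinearMap 𝕜 (⇑ψ ∘ jetMap 𝕜 A P k) ∧ IsDiffOp A k (⇑ψ ∘ jetMap 𝕜 A P k)) ∧
    -- … and is an A-module homomorphism (bijectivity follows from the two items above)
    (∀ ψ ψ' : JetMod 𝕜 A P k →ₗ[A] Q,
        ⇑(ψ + ψ') ∘ jetMap 𝕜 A P k = ⇑ψ ∘ jetMap 𝕜 A P k + ⇑ψ' ∘ jetMap 𝕜 A P k) ∧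
    (∀ (a : A) (ψ : JetMod 𝕜 A P k →ₗ[A] Q),
        ⇑(a • ψ) ∘ jetMap 𝕜 A P k = a • (⇑ψ ∘ jetMap 𝕜 A P k)) :=
  jet_module_represents_diff_general 𝕜 A P Q k
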